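/- Let S and T be totally ordered c-semirings (their induced orders are total). A mapping α : S → T is aggregation compatible if and only if α is a semiring homomorphism, where aggregation compatible means: (1) α is monotonic with α(0) = 0 and α(1) = 1; and (2) for any finite multisets I1, I2 of elements of S, α(Π_{x∈I1} x) ≤ α(Π_{x∈I2} x) implies Π_{x∈I1} α(x) ≤ Π_{x∈I2} α(x). -/

import Mathlib

structure CSemiring (S : Type*) where
  add : S → S → S
  mul : S → S → S
  zero : S
  one : S
  add_comm : ∀ a b, add a b = add b a
  add_assoc : ∀ a b c, add (add a b) c = add a (add b c)
  add_idem : ∀ a, add a a = a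
  add_zero : ∀ a, add a zero = a
  add_one : ∀ a, add a one = one
  mul_comm : ∀ a b, mul a b = mul b a
  mul_assoc : ∀ a b c, mul (mul a b) c = mul a (mul b c)
  mul_one : ∀ a, mul a one = a
  mul_zero : ∀ a, mul a zero = zero
  left_distrib : ∀ a b c, mul a (add b c) = add (mul a b) (mul a c)

/-- The induced order: `a ≤ b` iff `a + b = b`. -/
def CSemiring.le {S : Type*} (C : CSemiring S) (a b : S) : Prop := C.add a b = b

/-- Induced strict order. -/
def CSemiring.lt {S : Type*} (C : CSemiring S) (a b : S) : Prop := C.le a b ∧ a ≠ b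

/-- Semiring homomorphism: preserves 0, 1, + and ×. -/
def CSemiring.isHom {S T : Type*} (C : CSemiring S) (D : CSemiring T) (α : S → T) : Prop :=
  α C.zero = D.zero ∧ α C.one = D.one ∧
  (∀ a b, α (C.add a b) = D.add (α a) (α b)) ∧
  (∀ a b, α (C.mul a b) = D.mul (α a) (α b))

/-- Product over a list (finite multiset) of elements. -/
def CSemiring.listProd {S : Type*} (C : CSemiring S) (l : List S) : S := l.foldr C.mul C.one

/-- Product of a finite family. -/
def CSemiring.finProd {S : Type*} (C : CSemiring S) {m : ℕ} (f : Fin m → S) : S :=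
  C.listProd (List.ofFn f)

/-- Sum of a finite family. -/
def CSemiring.finSum {S : Type*} (C : CSemiring S) {n : ℕ} (f : Fin n → S) : S :=
  (List.ofFn f).foldr C.add C.zero

/-- Condition (Equation 1): for all positive m,n and families u,v,
if Σᵢ Πⱼ α(uᵢⱼ) < Σᵢ Πⱼ α(vᵢⱼ) in T then Σᵢ Πⱼ uᵢⱼ < Σᵢ Πⱼ vᵢⱼ in S. -/
def CSemiring.eq1Cond {S T : Type*} (C : CSemiring S) (D : CSemiring T) (α : S → T) : Prop :=
  ∀ (m n : ℕ), 0 < m → 0 < n → ∀ (u v : Fin n → Fin m → S),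
    D.lt (D.finSum fun i => D.finProd fun j => α (u i j))
         (D.finSum fun i => D.finProd fun j => α (v i j)) →
    C.lt (C.finSum fun i => C.finProd fun j => u i j)
         (C.finSum fun i => C.finProd fun j => v i j)

/-!
A homomorphism preserves products of lists and, since the order is defined through `+`, is
monotone; so it is aggregation compatible. Conversely, in a totally ordered `S` the sum `a + b`
is the larger of `a` and `b`, so a monotone map preserves `+`; and comparing the multisets
`{a, b}` and `{a * b}`, whose products agree, in both directions gives
`α a * α b = α (a * b)` by antisymmetry.
-/

namespace CSemiring

variable {S T : Type*} (C : CSemiring S) (D : CSemiring T)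

theorem le_refl (a : S) : C.le a a := C.add_idem a

theorem le_antisymm {a b : S} (hab : C.le a b) (hba : C.le b a) : a = b := by
  unfold le at hab hba
  rw [← hba, C.add_comm, hab]

theorem listProd_singleton (a : S) : C.listProd [a] = a := C.mul_one a

theorem listProd_pair (a b : S) : C.listProd [a, b] = C.mul a b := by
  rw [listProd, List.foldr_cons, ← listProd, listProd_singleton]

variable {C D}

theorem map_add_of_monotone (totS : ∀ a b : S, C.le a b ∨ C.le b a) {α : S → T}
    (mono : ∀ a b, C.le a b → D.le (α a) (α b)) (a b : S) :
    α (C.add a b) = D.add (α a) (α b) := by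
  rcases totS a b with hab | hba
  · rw [hab, mono a b hab]
  · rw [C.add_comm, hba, D.add_comm, mono b a hba]

theorem map_mul_of_listProd_le {α : S → T}
    (hP : ∀ l1 l2 : List S, D.le (α (C.listProd l1)) (α (C.listProd l2)) →
      D.le (D.listProd (l1.map α)) (D.listProd (l2.map α)))
    (a b : S) : α (C.mul a b) = D.mul (α a) (α b) := by
  have key : C.listProd [a, b] = C.listProd [C.mul a b] := by
    rw [listProd_pair, listProd_singleton]
  have hle := hP [a, b] [C.mul a b] (key ▸ D.le_refl _)
  have hge := hP [C.mul a b] [a, b] (key ▸ D.le_refl _)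
  simp only [List.map_cons, List.map_nil, listProd_pair, listProd_singleton] at hle hge
  exact D.le_antisymm hge hle

theorem isHom.map_listProd {α : S → T} (hα : C.isHom D α) (l : List S) :
    α (C.listProd l) = D.listProd (l.map α) := by
  induction l with
  | nil => exact hα.2.1
  | cons x xs ih =>
    simp only [listProd, List.foldr_cons, List.map_cons] at ih ⊢
    rw [hα.2.2.2, ih]

theorem isHom.monotone {α : S → T} (hα : C.isHom D α) (a b : S) (hab : C.le a b) :
    D.le (α a) (α b) := by
  unfold le at hab ⊢
  rw [← hα.2.2.1, hab]

end CSemiring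

theorem stmt16_general {S T : Type*} (C : CSemiring S) (D : CSemiring T)
    (totS : ∀ a b : S, C.le a b ∨ C.le b a)
    (α : S → T) :
    ((∀ a b, C.le a b → D.le (α a) (α b)) ∧
     α C.zero = D.zero ∧ α C.one = D.one ∧
     (∀ l1 l2 : List S,
       D.le (α (C.listProd l1)) (α (C.listProd l2)) →
       D.le (D.listProd (l1.map α)) (D.listProd (l2.map α))))
    ↔ C.isHom D α := by
  constructor
  · rintro ⟨mono, h0, h1, hP⟩
    exact ⟨h0, h1, CSemiring.map_add_of_monotone totS mono, CSemiring.map_mul_of_listProd_le hP⟩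
  · intro hα
    refine ⟨hα.monotone, hα.1, hα.2.1, fun l1 l2 h => ?_⟩
    rwa [← hα.map_listProd, ← hα.map_listProd]

theorem stmt16 {S T : Type*} (C : CSemiring S) (D : CSemiring T)
    (totS : ∀ a b : S, C.le a b ∨ C.le b a)
    (totT : ∀ a b : T, D.le a b ∨ D.le b a)
    (α : S → T) :
    ((∀ a b, C.le a b → D.le (α a) (α b)) ∧
     α C.zero = D.zero ∧ α C.one = D.one ∧
     (∀ l1 l2 : List S,
       D.le (α (C.listProd l1)) (α (C.listProd l2)) →
       D.le (D.listProd (l1.map α)) (D.listProd (l2.map α))))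
    ↔ C.isHom D α :=
  stmt16_general C D totS α
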